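/- Let f : ℝⁿ → ℝ be convex, c_i : ℝⁿ → ℝ concave (i = 1,…,m), all continuously differentiable, assume the primal solution set is nonempty and bounded and the Slater condition holds, fix y with c_i(y) > 0 for all i and f(y) > min_Ω f, fix k > 0, and let (x_s, λ_s)_{s≥0} be any sequence generated by the EPM: λ_0 has all positive entries, x_{s+1} is a global minimizer of 𝓛_y(·,λ_s,k) with k c_i(x_{s+1}) + 1 > 0 for all i, and λ_{i,s+1} = λ_{i,s}(k c_i(x_{s+1}) + 1)⁻¹. Then the asymptotic complementarity condition holds: lim_{s→∞} Σ_{i=1}^m λ_{i,s} c_i(x_s) = 0. -/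

import Mathlib

/-!
Write `F z = -log (f y - f z)`, a convex function on `S = {z | f z < f y}`. The multiplier update
is chosen so that the first-order condition of `𝓛_y(·, λ_s, k)` at `x_{s+1}` is the first-order
condition of the ordinary Lagrangian `F - ∑ λ_{i,s+1} c_i`; being convex on `S`, the Lagrangian
is then minimized over `S` at `x_{s+1}`. Consequently the dual values `d(λ_{s+1})` increase by at
least `k ∑ λ_{i,s+2} c_i(x_{s+2})²` per step while staying below `F(x*)`, so these increments
tend to `0`. A Lagrange multiplier `λ*` (it exists by Slater's condition) makes the
Kullback–Leibler distance from `λ*` to `λ_s` nonincreasing, which bounds the multipliers, and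
then `(λ_{i,s} c_i(x_s))² ≤ λ_{i,s} · λ_{i,s} c_i(x_s)² → 0`.
-/

open Real Filter Topology Set

theorem sq_sqrt_sub_sqrt_le {a b : ℝ} (ha : 0 ≤ a) (hb : 0 < b) :
    (√b - √a) ^ 2 ≤ a * log a - a * log b - a + b := by
  rcases ha.eq_or_lt with rfl | ha
  · simp [sq_sqrt hb.le]
  -- `log (a / b) = 2 log (√a / √b) ≥ 2 (1 - √b / √a)`
  have hlog : 2 * (1 - √b / √a) ≤ log a - log b := by
    have h := log_le_sub_one_of_pos (div_pos (sqrt_pos.2 hb) (sqrt_pos.2 ha))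
    rw [log_div (sqrt_pos.2 hb).ne' (sqrt_pos.2 ha).ne', log_sqrt hb.le, log_sqrt ha.le] at h
    linarith
  have hdiv : a * (√b / √a) = √a * √b := by
    rw [mul_div_assoc', div_eq_iff (sqrt_pos.2 ha).ne', mul_right_comm, mul_self_sqrt ha.le]
  have hsq : (√b - √a) ^ 2 = b - 2 * (√a * √b) + a := by
    rw [sub_sq, sq_sqrt hb.le, sq_sqrt ha.le]
    ring
  rw [hsq]
  linarith [mul_le_mul_of_nonneg_left hlog ha.le]

theorem Monotone.tendsto_sub_succ_of_bddAbove {e : ℕ → ℝ} (he : Monotone e)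
    (hbdd : BddAbove (range e)) : Tendsto (fun s => e (s + 1) - e s) atTop (𝓝 0) := by
  have hlim := tendsto_atTop_ciSup he hbdd
  simpa using (hlim.comp (tendsto_add_atTop_nat 1)).sub hlim

section Convex

variable {E : Type*} [AddCommGroup E] [Module ℝ E] {s : Set E}

theorem ConcaveOn.sum {ι : Type*} {t : Finset ι} {g : ι → E → ℝ} (hs : Convex ℝ s)
    (hg : ∀ i ∈ t, ConcaveOn ℝ s (g i)) : ConcaveOn ℝ s fun z => ∑ i ∈ t, g i z :=
  ⟨hs, fun x hx y hy a b ha hb hab => by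
    simp only [smul_eq_mul, Finset.mul_sum, ← Finset.sum_add_distrib]
    exact Finset.sum_le_sum fun i hi => by simpa using (hg i hi).2 hx hy ha hb hab⟩

theorem ConcaveOn.log {g : E → ℝ} (hg : ConcaveOn ℝ s g) (hpos : ∀ x ∈ s, 0 < g x) :
    ConcaveOn ℝ s fun x => Real.log (g x) :=
  ⟨hg.1, fun x hx y hy a b ha hb hab => by
    have hcomb := hg.2 hx hy ha hb hab
    simp only [smul_eq_mul] at hcomb ⊢
    calc a * Real.log (g x) + b * Real.log (g y) ≤ Real.log (a * g x + b * g y) := by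
          simpa using strictConcaveOn_log_Ioi.concaveOn.2 (hpos x hx) (hpos y hy) ha hb hab
      _ ≤ Real.log (g (a • x + b • y)) := by
          refine log_le_log ?_ hcomb
          simpa using convex_Ioi (0 : ℝ) (hpos x hx) (hpos y hy) ha hb hab⟩

theorem exists_slater_point {ι : Type*} {f : E → ℝ} {c : ι → E → ℝ} (hf : ConvexOn ℝ s f)
    (hc : ∀ i, ConcaveOn ℝ s (c i)) {x₀ y : E} (hx₀ : x₀ ∈ s) (hy : y ∈ s) (hfx₀ : f x₀ < f y)
    (hx₀c : ∀ i, 0 ≤ c i x₀) (hyc : ∀ i, 0 < c i y) :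
    ∃ w ∈ s, f w < f y ∧ ∀ i, 0 < c i w := by
  have hhalf : (0 : ℝ) ≤ 2⁻¹ := by norm_num
  refine ⟨(2⁻¹ : ℝ) • x₀ + (2⁻¹ : ℝ) • y, hf.1 hx₀ hy hhalf hhalf (by norm_num), ?_, fun i => ?_⟩
  · have := hf.2 hx₀ hy hhalf hhalf (by norm_num)
    simp only [smul_eq_mul] at this
    linarith
  · have := (hc i).2 hx₀ hy hhalf hhalf (by norm_num)
    simp only [smul_eq_mul] at this
    linarith [hx₀c i, hyc i]

end Convex

section Normed

variable {E : Type*} [NormedAddCommGroup E] [NormedSpace ℝ E] {s : Set E}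

theorem ConvexOn.isMinOn_of_isLocalMinOn_sub {L g : E → ℝ} {x : E} (hL : ConvexOn ℝ s L)
    (hx : x ∈ s) (hmin : IsLocalMinOn (fun z => L z - g z) s x)
    (hg : HasFDerivAt g (0 : E →L[ℝ] ℝ) x) : IsMinOn L s x := by
  -- on the segment from `x` to `z`, `(g (φ t) - g x) / t ≤ L z - L x`, and the left side tends to 0
  intro z hz
  set φ : ℝ → E := fun t => x + t • (z - x)
  have hφ : Tendsto φ (𝓝[>] 0) (𝓝[s] x) := by
    refine tendsto_nhdsWithin_iff.2 ⟨?_, ?_⟩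
    · exact ((continuous_const.add (continuous_id.smul continuous_const)).tendsto' 0 x
        (by simp)).mono_left nhdsWithin_le_nhds
    · filter_upwards [Ioo_mem_nhdsGT (zero_lt_one' ℝ)] with t ht
      exact hL.1.add_smul_sub_mem hx hz ⟨ht.1.le, ht.2.le⟩
  have hslope : Tendsto (fun t => (g (φ t) - g x) / t) (𝓝[>] 0) (𝓝 0) := by
    have hφd : HasDerivAt φ (z - x) 0 := by
      have := ((hasDerivAt_id (0 : ℝ)).smul_const (z - x)).const_add x
      rwa [one_smul] at this
    have hd : HasDerivAt (g ∘ φ) 0 0 := by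
      simpa using hg.comp_hasDerivAt_of_eq 0 hφd (by simp [φ])
    simpa [slope_fun_def_field, φ] using (hasDerivAt_iff_tendsto_slope.1 hd).mono_left
      (nhdsWithin_mono _ fun t (ht : t ∈ Ioi 0) => ht.ne')
  have hle : ∀ᶠ t in 𝓝[>] (0 : ℝ), (g (φ t) - g x) / t ≤ L z - L x := by
    filter_upwards [hφ.eventually hmin, Ioo_mem_nhdsGT (zero_lt_one' ℝ)] with t hlt ht
    rw [div_le_iff₀ ht.1]
    have hconv := hL.2 hx hz (sub_nonneg.2 ht.2.le) ht.1.le (sub_add_cancel 1 t)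
    have hφt : φ t = (1 - t) • x + t • z := by simp only [φ]; module
    rw [hφt] at hlt ⊢
    simp only [smul_eq_mul] at hconv
    linarith
  exact sub_nonneg.1 (le_of_tendsto hslope hle)

end Normed

section Duality

variable {ι : Type*} [Fintype ι]

theorem ContinuousLinearMap.apply_prod_pi_eq_sum [DecidableEq ι]
    (φ : (ℝ × (ι → ℝ)) →L[ℝ] ℝ) (p : ℝ × (ι → ℝ)) :
    φ p = φ (1, 0) * p.1 + ∑ i, φ (0, Pi.single i 1) * p.2 i := by
  have hp : p = p.1 • ((1 : ℝ), (0 : ι → ℝ)) + ∑ i, p.2 i • ((0 : ℝ), (Pi.single i 1 : ι → ℝ)) := by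
    ext j
    · simp [Prod.fst_sum]
    · simp [Prod.snd_sum, Finset.sum_apply, Pi.single_apply]
  conv_lhs => rw [hp]
  simp only [map_add, map_sum, map_smul, smul_eq_mul, mul_comm]

theorem exists_dual_functional_of_disjoint_orthant {A : Set (ℝ × (ι → ℝ))} (hA : Convex ℝ A)
    (hAo : IsOpen A) (hdisj : Disjoint A (Iic 0 ×ˢ Ici 0)) :
    ∃ (α : ℝ) (g : ι → ℝ), α ≤ 0 ∧ (∀ i, 0 ≤ g i) ∧ ∀ p ∈ A, α * p.1 + ∑ i, g i * p.2 i < 0 := by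
  classical
  obtain ⟨φ, u, hφA, hφK⟩ :=
    geometric_hahn_banach_open hA hAo ((convex_Iic 0).prod (convex_Ici 0)) hdisj
  have hu : u ≤ 0 := by simpa using hφK 0 (by simp)
  -- the orthant is a cone, so `φ` cannot be negative on it
  have hK : ∀ b ∈ Iic (0 : ℝ) ×ˢ Ici (0 : ι → ℝ), 0 ≤ φ b := by
    intro b hb
    by_contra! hneg
    have hr : 0 ≤ (u - 1) / φ b := div_nonneg_of_nonpos (by linarith) hneg.le
    have := hφK (((u - 1) / φ b) • b)
      ⟨mem_Iic.2 (smul_nonpos_of_nonneg_of_nonpos hr hb.1), mem_Ici.2 (smul_nonneg hr hb.2)⟩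
    rw [map_smul, smul_eq_mul, div_mul_cancel₀ _ hneg.ne] at this
    linarith
  refine ⟨φ (1, 0), fun i => φ (0, Pi.single i 1), ?_,
    fun i => hK _ ⟨mem_Iic.2 le_rfl, mem_Ici.2 (Pi.single_nonneg.2 zero_le_one)⟩, fun p hp => ?_⟩
  · have := hK (-(1, 0)) ⟨by simp, by simp⟩
    rwa [map_neg, neg_nonneg] at this
  · rw [← φ.apply_prod_pi_eq_sum]
    exact (hφA p hp).trans_le hu

theorem exists_lagrange_multipliers_of_slater {E : Type*} [AddCommGroup E] [Module ℝ E]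
    {S : Set E} {F : E → ℝ} {c : ι → E → ℝ} (hF : ConvexOn ℝ S F)
    (hc : ∀ i, ConcaveOn ℝ S (c i)) {w : E} (hw : w ∈ S) (hwc : ∀ i, 0 < c i w) {x₀ : E}
    (hopt : ∀ z ∈ S, (∀ i, 0 ≤ c i z) → F x₀ ≤ F z) :
    ∃ μ : ι → ℝ, (∀ i, 0 ≤ μ i) ∧ ∀ z ∈ S, F x₀ + ∑ i, μ i * c i z ≤ F z := by
  set A : Set (ℝ × (ι → ℝ)) := {p | ∃ z ∈ S, F z - F x₀ < p.1 ∧ ∀ i, p.2 i < c i z}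
  have hAo : IsOpen A := by
    have : A = ⋃ z ∈ S, Ioi (F z - F x₀) ×ˢ Set.pi univ fun i => Iio (c i z) := by
      ext p
      simp [A, and_left_comm]
    rw [this]
    exact isOpen_biUnion fun z _ =>
      isOpen_Ioi.prod (isOpen_set_pi finite_univ fun i _ => isOpen_Iio)
  have hAc : Convex ℝ A := by
    rintro p ⟨z₁, hz₁, hp₁, hp₂⟩ q ⟨z₂, hz₂, hq₁, hq₂⟩ a b ha hb hab
    refine ⟨a • z₁ + b • z₂, hF.1 hz₁ hz₂ ha hb hab, ?_, fun i => ?_⟩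
    · have h₁ : (z₁, p.1 + F x₀) ∈ {r : E × ℝ | r.1 ∈ S ∧ F r.1 < r.2} := ⟨hz₁, by simp; linarith⟩
      have h₂ : (z₂, q.1 + F x₀) ∈ {r : E × ℝ | r.1 ∈ S ∧ F r.1 < r.2} := ⟨hz₂, by simp; linarith⟩
      have h := (hF.convex_strict_epigraph h₁ h₂ ha hb hab).2
      have hx₀ : F x₀ = a * F x₀ + b * F x₀ := by rw [← add_mul, hab, one_mul]
      simp only [Prod.fst_add, Prod.snd_add, Prod.smul_fst, Prod.smul_snd, smul_eq_mul] at h ⊢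
      linarith
    · have h₁ : (z₁, p.2 i) ∈ {r : E × ℝ | r.1 ∈ S ∧ r.2 < c i r.1} := ⟨hz₁, hp₂ i⟩
      have h₂ : (z₂, q.2 i) ∈ {r : E × ℝ | r.1 ∈ S ∧ r.2 < c i r.1} := ⟨hz₂, hq₂ i⟩
      simpa using ((hc i).convex_strict_hypograph h₁ h₂ ha hb hab).2
  have hdisj : Disjoint A (Iic 0 ×ˢ Ici 0) := by
    refine Set.disjoint_left.2 fun p ⟨z, hz, hp₁, hp₂⟩ ⟨hq₁, hq₂⟩ => ?_
    have := hopt z hz fun i => (hq₂ i).trans (hp₂ i).le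
    simp only [mem_Iic] at hq₁
    linarith
  obtain ⟨α, g, hα, hg, hneg⟩ := exists_dual_functional_of_disjoint_orthant hAc hAo hdisj
  have hlim : ∀ z ∈ S, α * (F z - F x₀) + ∑ i, g i * c i z ≤ 0 := by
    intro z hz
    have hcont : Tendsto (fun ε => α * (F z - F x₀ + ε) + ∑ i, g i * (c i z - ε)) (𝓝[>] 0)
        (𝓝 (α * (F z - F x₀) + ∑ i, g i * c i z)) :=
      ((by fun_prop : Continuous fun ε => α * (F z - F x₀ + ε) + ∑ i, g i * (c i z - ε)).tendsto'
        0 _ (by simp)).mono_left nhdsWithin_le_nhds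
    refine le_of_tendsto hcont (eventually_nhdsWithin_of_forall fun ε (hε : 0 < ε) => ?_)
    exact (hneg (F z - F x₀ + ε, fun i => c i z - ε)
      ⟨z, hz, by simp [hε], fun i => by simp [hε]⟩).le
  -- the Slater point keeps the separating functional from ignoring the objective
  have hα' : α < 0 := by
    refine hα.lt_of_ne fun h0 => ?_
    have := hneg (F w - F x₀ + 1, fun i => c i w / 2)
      ⟨w, hw, by simp, fun i => half_lt_self (hwc i)⟩
    rw [h0, zero_mul, zero_add] at this
    exact this.not_ge (Finset.sum_nonneg fun i _ => mul_nonneg (hg i) (half_pos (hwc i)).le)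
  refine ⟨fun i => g i / -α, fun i => div_nonneg (hg i) (neg_nonneg.2 hα), fun z hz => ?_⟩
  have hsum : ∑ i, g i / -α * c i z = (∑ i, g i * c i z) / -α := by
    rw [Finset.sum_div]
    exact Finset.sum_congr rfl fun i _ => div_mul_eq_mul_div _ _ _
  rw [hsum, ← le_sub_iff_add_le', div_le_iff₀ (neg_pos.2 hα')]
  linarith [hlim z hz]

end Duality

section MultiplierMethod

variable {E ι : Type*} [Fintype ι]

def lagrangian (F : E → ℝ) (c : ι → E → ℝ) (μ : ι → ℝ) (z : E) : ℝ :=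
  F z - ∑ i, μ i * c i z

noncomputable def klDist (a b : ι → ℝ) : ℝ :=
  ∑ i, (a i * log (a i) - a i * log (b i) - a i + b i)

theorem sq_sqrt_sub_sqrt_le_klDist {a b : ι → ℝ} (ha : ∀ i, 0 ≤ a i) (hb : ∀ i, 0 < b i)
    (i : ι) : (√(b i) - √(a i)) ^ 2 ≤ klDist a b :=
  (sq_sqrt_sub_sqrt_le (ha i) (hb i)).trans <| Finset.single_le_sum
    (fun j _ => (sq_nonneg _).trans (sq_sqrt_sub_sqrt_le (ha j) (hb j))) (Finset.mem_univ i)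

/-- The exterior point method in abstract form: `x (s + 1)` minimizes the Lagrangian at the
*updated* multipliers. On the dual side each step is a proximal point step for `klDist`. -/
structure IsMultiplierSeq (S : Set E) (F : E → ℝ) (c : ι → E → ℝ) (k : ℝ) (x : ℕ → E)
    (lam : ℕ → ι → ℝ) : Prop where
  lam_pos : ∀ s i, 0 < lam s i
  sub_succ : ∀ s i, lam s i - lam (s + 1) i = k * (lam (s + 1) i * c i (x (s + 1)))
  mem : ∀ s, x (s + 1) ∈ S
  isMinOn : ∀ s, IsMinOn (lagrangian F c (lam (s + 1))) S (x (s + 1))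

namespace IsMultiplierSeq

variable {S : Set E} {F : E → ℝ} {c : ι → E → ℝ} {k : ℝ} {x : ℕ → E} {lam : ℕ → ι → ℝ}
  {x₀ : E} {μ : ι → ℝ}

theorem lagrangian_le (h : IsMultiplierSeq S F c k x lam) (hx₀ : x₀ ∈ S)
    (hx₀c : ∀ i, 0 ≤ c i x₀) (s : ℕ) : lagrangian F c (lam (s + 1)) (x (s + 1)) ≤ F x₀ :=
  (h.isMinOn s hx₀).trans <| sub_le_self _ <|
    Finset.sum_nonneg fun i _ => mul_nonneg (h.lam_pos (s + 1) i).le (hx₀c i)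

theorem lagrangian_add_le (h : IsMultiplierSeq S F c k x lam) (s : ℕ) :
    lagrangian F c (lam (s + 1)) (x (s + 1)) + k * ∑ i, lam (s + 2) i * c i (x (s + 2)) ^ 2 ≤
      lagrangian F c (lam (s + 2)) (x (s + 2)) := by
  have hmin : lagrangian F c (lam (s + 1)) (x (s + 1)) ≤
      lagrangian F c (lam (s + 1)) (x (s + 2)) := h.isMinOn s (h.mem (s + 1))
  have hsplit : ∑ i, lam (s + 1) i * c i (x (s + 2)) = ∑ i, lam (s + 2) i * c i (x (s + 2)) +
      k * ∑ i, lam (s + 2) i * c i (x (s + 2)) ^ 2 := by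
    rw [Finset.mul_sum, ← Finset.sum_add_distrib]
    refine Finset.sum_congr rfl fun i _ => ?_
    linear_combination c i (x (s + 2)) * h.sub_succ (s + 1) i
  simp only [lagrangian] at hmin ⊢
  linarith

theorem monotone_lagrangian (h : IsMultiplierSeq S F c k x lam) (hk : 0 ≤ k) :
    Monotone fun s => lagrangian F c (lam (s + 1)) (x (s + 1)) :=
  monotone_nat_of_le_succ fun s => le_of_add_le_of_nonneg_left (h.lagrangian_add_le s) <|
    mul_nonneg hk <| Finset.sum_nonneg fun i _ => mul_nonneg (h.lam_pos _ i).le (sq_nonneg _)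

theorem tendsto_mul_sq (h : IsMultiplierSeq S F c k x lam) (hk : 0 < k) (hx₀ : x₀ ∈ S)
    (hx₀c : ∀ i, 0 ≤ c i x₀) (i : ι) :
    Tendsto (fun s => lam (s + 2) i * c i (x (s + 2)) ^ 2) atTop (𝓝 0) := by
  have hgap := (h.monotone_lagrangian hk.le).tendsto_sub_succ_of_bddAbove
    ⟨F x₀, forall_mem_range.2 (h.lagrangian_le hx₀ hx₀c)⟩
  refine squeeze_zero (fun s => mul_nonneg (h.lam_pos _ i).le (sq_nonneg _)) (fun s => ?_)
    (by simpa using hgap.div_const k)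
  have hi : lam (s + 2) i * c i (x (s + 2)) ^ 2 ≤ ∑ j, lam (s + 2) j * c j (x (s + 2)) ^ 2 :=
    Finset.single_le_sum (f := fun j => lam (s + 2) j * c j (x (s + 2)) ^ 2)
      (fun j _ => mul_nonneg (h.lam_pos _ j).le (sq_nonneg _)) (Finset.mem_univ i)
  rw [le_div_iff₀ hk]
  linarith [h.lagrangian_add_le s, mul_le_mul_of_nonneg_left hi hk.le]

theorem sum_mul_le (h : IsMultiplierSeq S F c k x lam) (hx₀ : x₀ ∈ S) (hx₀c : ∀ i, 0 ≤ c i x₀)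
    (hdual : ∀ z ∈ S, F x₀ + ∑ i, μ i * c i z ≤ F z) (s : ℕ) :
    ∑ i, μ i * c i (x (s + 1)) ≤ ∑ i, lam (s + 1) i * c i (x (s + 1)) := by
  have := h.lagrangian_le hx₀ hx₀c s
  simp only [lagrangian] at this
  linarith [hdual _ (h.mem s)]

theorem klDist_succ_le (h : IsMultiplierSeq S F c k x lam) (hk : 0 ≤ k) (hx₀ : x₀ ∈ S)
    (hx₀c : ∀ i, 0 ≤ c i x₀) (hμ : ∀ i, 0 ≤ μ i)
    (hdual : ∀ z ∈ S, F x₀ + ∑ i, μ i * c i z ≤ F z) (s : ℕ) :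
    klDist μ (lam (s + 1)) ≤ klDist μ (lam s) := by
  have hterm : ∀ i, (μ i * log (μ i) - μ i * log (lam (s + 1) i) - μ i + lam (s + 1) i) -
      (μ i * log (μ i) - μ i * log (lam s i) - μ i + lam s i) ≤
        k * (μ i * c i (x (s + 1)) - lam (s + 1) i * c i (x (s + 1))) := by
    intro i
    have hlog : log (lam s i) - log (lam (s + 1) i) ≤ k * c i (x (s + 1)) := by
      have hs := h.lam_pos s i
      have hs₁ := h.lam_pos (s + 1) i
      have hle := log_le_sub_one_of_pos (div_pos hs hs₁)
      rwa [log_div hs.ne' hs₁.ne', div_sub_one hs₁.ne', h.sub_succ s i, mul_left_comm,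
        mul_div_cancel_left₀ _ hs₁.ne'] at hle
    linarith [mul_le_mul_of_nonneg_left hlog (hμ i), h.sub_succ s i]
  have hsum := Finset.sum_le_sum fun i (_ : i ∈ Finset.univ) => hterm i
  rw [Finset.sum_sub_distrib, ← Finset.mul_sum, Finset.sum_sub_distrib] at hsum
  have := mul_le_mul_of_nonneg_left (h.sum_mul_le hx₀ hx₀c hdual s) hk
  simp only [klDist]
  linarith

theorem lam_le (h : IsMultiplierSeq S F c k x lam) (hk : 0 ≤ k) (hx₀ : x₀ ∈ S)
    (hx₀c : ∀ i, 0 ≤ c i x₀) (hμ : ∀ i, 0 ≤ μ i)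
    (hdual : ∀ z ∈ S, F x₀ + ∑ i, μ i * c i z ≤ F z) (s : ℕ) (i : ι) :
    lam s i ≤ (√(klDist μ (lam 0)) + √(μ i)) ^ 2 := by
  have hV : klDist μ (lam s) ≤ klDist μ (lam 0) :=
    antitone_nat_of_succ_le (f := fun s => klDist μ (lam s))
      (h.klDist_succ_le hk hx₀ hx₀c hμ hdual) (Nat.zero_le s)
  have hsq := abs_le_sqrt ((sq_sqrt_sub_sqrt_le_klDist hμ (h.lam_pos s) i).trans hV)
  calc lam s i = √(lam s i) ^ 2 := (sq_sqrt (h.lam_pos s i).le).symm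
    _ ≤ _ := pow_le_pow_left₀ (sqrt_nonneg _)
        (by linarith [le_abs_self (√(lam s i) - √(μ i))]) 2

theorem tendsto_sum_mul (h : IsMultiplierSeq S F c k x lam) (hk : 0 < k) (hx₀ : x₀ ∈ S)
    (hx₀c : ∀ i, 0 ≤ c i x₀) (hμ : ∀ i, 0 ≤ μ i)
    (hdual : ∀ z ∈ S, F x₀ + ∑ i, μ i * c i z ≤ F z) :
    Tendsto (fun s => ∑ i, lam s i * c i (x s)) atTop (𝓝 0) := by
  refine (tendsto_add_atTop_iff_nat 2).1 ?_
  have hi : ∀ i, Tendsto (fun s => lam (s + 2) i * c i (x (s + 2))) atTop (𝓝 0) := by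
    intro i
    set B := (√(klDist μ (lam 0)) + √(μ i)) ^ 2
    refine squeeze_zero_norm (fun s => abs_le_sqrt ?_)
      (by simpa using ((h.tendsto_mul_sq hk hx₀ hx₀c i).const_mul B).sqrt)
    calc (lam (s + 2) i * c i (x (s + 2))) ^ 2
        = lam (s + 2) i * (lam (s + 2) i * c i (x (s + 2)) ^ 2) := by ring
      _ ≤ B * (lam (s + 2) i * c i (x (s + 2)) ^ 2) :=
        mul_le_mul_of_nonneg_right (h.lam_le hk.le hx₀ hx₀c hμ hdual _ i)
          (mul_nonneg (h.lam_pos _ i).le (sq_nonneg _))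
  simpa using tendsto_finsetSum Finset.univ fun i _ => hi i

end IsMultiplierSeq

end MultiplierMethod

section ExteriorPoint

variable {E ι : Type*} [NormedAddCommGroup E] [NormedSpace ℝ E] [Fintype ι] {S : Set E}
  {F : E → ℝ} {c : ι → E → ℝ} {k : ℝ}

theorem hasFDerivAt_sum_log_sub_eq_zero {μ : ι → ℝ} {x : E}
    (hcd : ∀ i, DifferentiableAt ℝ (c i) x) (hk : k ≠ 0) (ht : ∀ i, 0 < k * c i x + 1) :
    HasFDerivAt (fun z => ∑ i, (k⁻¹ * (μ i * log (k * c i z + 1)) -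
      μ i * (k * c i x + 1)⁻¹ * c i z)) (0 : E →L[ℝ] ℝ) x := by
  have hterm : ∀ i, HasDerivAt (fun t => k⁻¹ * (μ i * log (k * t + 1)) -
      μ i * (k * c i x + 1)⁻¹ * t) 0 (c i x) := by
    intro i
    have hlin : HasDerivAt (fun t => k * t + 1) k (c i x) := by
      simpa using ((hasDerivAt_id (c i x)).const_mul k).add_const 1
    refine ((((hlin.log (ht i).ne').const_mul (μ i)).const_mul k⁻¹).fun_sub
      ((hasDerivAt_id' (c i x)).const_mul (μ i * (k * c i x + 1)⁻¹))).congr_deriv ?_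
    field_simp
    ring
  simpa using HasFDerivAt.fun_sum fun i (_ : i ∈ Finset.univ) =>
    (hterm i).comp_hasFDerivAt x (hcd i).hasFDerivAt

theorem isMinOn_lagrangian_of_isMinOn_exterior {μ : ι → ℝ} {x : E} (hF : ConvexOn ℝ S F)
    (hc : ∀ i, ConcaveOn ℝ S (c i)) (hcd : ∀ i, DifferentiableAt ℝ (c i) x) (hk : k ≠ 0)
    (hμ : ∀ i, 0 ≤ μ i) (hx : x ∈ S) (ht : ∀ i, 0 < k * c i x + 1)
    (hmin : IsMinOn (fun z => F z - k⁻¹ * ∑ i, μ i * log (k * c i z + 1))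
      {z | z ∈ S ∧ ∀ i, 0 < k * c i z + 1} x) :
    IsMinOn (lagrangian F c fun i => μ i * (k * c i x + 1)⁻¹) S x := by
  have hL : ConvexOn ℝ S (lagrangian F c fun i => μ i * (k * c i x + 1)⁻¹) :=
    hF.sub <| ConcaveOn.sum hF.1 fun i _ =>
      (hc i).smul (mul_nonneg (hμ i) (inv_nonneg.2 (ht i).le))
  -- the exterior distance function is this Lagrangian minus a function stationary at `x`
  refine hL.isMinOn_of_isLocalMinOn_sub hx ?_
    (hasFDerivAt_sum_log_sub_eq_zero (μ := μ) hcd hk ht)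
  have hnhds : ∀ᶠ z in 𝓝 x, ∀ i, 0 < k * c i z + 1 := eventually_all.2 fun i =>
    ((continuousAt_const.mul (hcd i).continuousAt).add continuousAt_const).eventually_const_lt
      (ht i)
  filter_upwards [self_mem_nhdsWithin, nhdsWithin_le_nhds hnhds] with z hzS hz
  have h := isMinOn_iff.1 hmin z ⟨hzS, hz⟩
  simp only [lagrangian, Finset.sum_sub_distrib, Finset.mul_sum] at h ⊢
  linarith

theorem isMultiplierSeq_of_isMinOn_exterior {x : ℕ → E} {lam : ℕ → ι → ℝ}
    (hF : ConvexOn ℝ S F) (hc : ∀ i, ConcaveOn ℝ S (c i)) (hcd : ∀ i, Differentiable ℝ (c i))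
    (hk : k ≠ 0) (hlam0 : ∀ i, 0 < lam 0 i)
    (hxstep : ∀ s, x (s + 1) ∈ S ∧ (∀ i, 0 < k * c i (x (s + 1)) + 1) ∧
      IsMinOn (fun z => F z - k⁻¹ * ∑ i, lam s i * log (k * c i z + 1))
        {z | z ∈ S ∧ ∀ i, 0 < k * c i z + 1} (x (s + 1)))
    (hlamstep : ∀ s i, lam (s + 1) i = lam s i * (k * c i (x (s + 1)) + 1)⁻¹) :
    IsMultiplierSeq S F c k x lam := by
  have hpos : ∀ s i, 0 < lam s i := by
    intro s
    induction s with
    | zero => exact hlam0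
    | succ s ih =>
      exact fun i => (hlamstep s i).symm ▸ mul_pos (ih i) (inv_pos.2 ((hxstep s).2.1 i))
  refine ⟨hpos, fun s i => ?_, fun s => (hxstep s).1, fun s => ?_⟩
  · rw [hlamstep s i]
    field_simp [((hxstep s).2.1 i).ne']
    ring
  · rw [show lam (s + 1) = _ from funext (hlamstep s)]
    exact isMinOn_lagrangian_of_isMinOn_exterior hF hc (fun i => (hcd i) _) hk
      (fun i => (hpos s i).le) (hxstep s).1 (hxstep s).2.1 (hxstep s).2.2

end ExteriorPoint

theorem EPM_asymptotic_complementarity_general {n m : ℕ}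
    (f : EuclideanSpace ℝ (Fin n) → ℝ)
    (c : Fin m → EuclideanSpace ℝ (Fin n) → ℝ)
    (hf : ConvexOn ℝ Set.univ f) (hc : ∀ i, ConcaveOn ℝ Set.univ (c i))
    (hcd : ∀ i, ContDiff ℝ 1 (c i))
    (Ω : Set (EuclideanSpace ℝ (Fin n)))
    (hΩ : Ω = {x | ∀ i, 0 ≤ c i x})
    (Xstar : Set (EuclideanSpace ℝ (Fin n)))
    (hXstar : Xstar = {x | x ∈ Ω ∧ ∀ z ∈ Ω, f x ≤ f z})
    (hne : Xstar.Nonempty)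
    (y : EuclideanSpace ℝ (Fin n)) (hy : ∀ i, 0 < c i y)
    (hfy : ∀ x ∈ Xstar, f x < f y)
    (k : ℝ) (hk : 0 < k)
    (x : ℕ → EuclideanSpace ℝ (Fin n)) (lam : ℕ → Fin m → ℝ)
    (hlam0 : ∀ i, 0 < lam 0 i)
    (hxstep : ∀ s : ℕ,
      f (x (s + 1)) < f y ∧ (∀ i, 0 < k * c i (x (s + 1)) + 1) ∧
      IsMinOn (fun z => -Real.log (f y - f z)
          - k⁻¹ * ∑ i, lam s i * Real.log (k * c i z + 1))
        {z : EuclideanSpace ℝ (Fin n) | f z < f y ∧ ∀ i, 0 < k * c i z + 1}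
        (x (s + 1)))
    (hlamstep : ∀ s : ℕ, ∀ i,
      lam (s + 1) i = lam s i * (k * c i (x (s + 1)) + 1)⁻¹) :
    Filter.Tendsto (fun s : ℕ => ∑ i, lam s i * c i (x s))
      Filter.atTop (nhds 0) := by
  obtain ⟨x₀, hx₀⟩ := hne
  have hfx₀ := hfy x₀ hx₀
  rw [hXstar, hΩ] at hx₀
  obtain ⟨hx₀c, hx₀min⟩ := hx₀
  have hS : Convex ℝ {z | f z < f y} := by simpa using hf.convex_lt (f y)
  have hF : ConvexOn ℝ {z | f z < f y} fun z => -log (f y - f z) :=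
    (ConcaveOn.log ((concaveOn_const _ hS).sub (hf.subset (subset_univ _) hS))
      fun z hz => sub_pos.2 hz).neg
  have hcS : ∀ i, ConcaveOn ℝ {z | f z < f y} (c i) := fun i => (hc i).subset (subset_univ _) hS
  obtain ⟨w, -, hw, hwc⟩ := exists_slater_point hf hc (mem_univ x₀) (mem_univ y) hfx₀ hx₀c hy
  obtain ⟨μ, hμ, hdual⟩ := exists_lagrange_multipliers_of_slater hF hcS (x₀ := x₀)
    (show w ∈ {z | f z < f y} from hw) hwc fun z hz hzc =>
      neg_le_neg (log_le_log (sub_pos.2 hz) (by linarith [hx₀min z hzc]))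
  exact (isMultiplierSeq_of_isMinOn_exterior hF hcS
    (fun i => (hcd i).differentiable one_ne_zero) hk.ne' hlam0 hxstep hlamstep).tendsto_sum_mul
    hk hfx₀ hx₀c hμ hdual

/-- Asymptotic complementarity of the exterior point method: along any EPM sequence
(`x_{s+1}` a global minimizer of `𝓛_y(·,λ_s,k)` with `k c_i(x_{s+1}) + 1 > 0`, and
`λ_{i,s+1} = λ_{i,s} (k c_i(x_{s+1}) + 1)⁻¹`), one has
`lim_{s→∞} ∑ i, λ_{i,s} c_i(x_s) = 0`. -/
theorem EPM_asymptotic_complementarity {n m : ℕ}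
    (f : EuclideanSpace ℝ (Fin n) → ℝ)
    (c : Fin m → EuclideanSpace ℝ (Fin n) → ℝ)
    (hf : ConvexOn ℝ Set.univ f) (hc : ∀ i, ConcaveOn ℝ Set.univ (c i))
    (hfd : ContDiff ℝ 1 f) (hcd : ∀ i, ContDiff ℝ 1 (c i))
    (Ω : Set (EuclideanSpace ℝ (Fin n)))
    (hΩ : Ω = {x | ∀ i, 0 ≤ c i x})
    (Xstar : Set (EuclideanSpace ℝ (Fin n)))
    (hXstar : Xstar = {x | x ∈ Ω ∧ ∀ z ∈ Ω, f x ≤ f z})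
    (hne : Xstar.Nonempty) (hbd : Bornology.IsBounded Xstar)
    (y : EuclideanSpace ℝ (Fin n)) (hy : ∀ i, 0 < c i y)
    (hfy : ∀ x ∈ Xstar, f x < f y)
    (k : ℝ) (hk : 0 < k)
    (x : ℕ → EuclideanSpace ℝ (Fin n)) (lam : ℕ → Fin m → ℝ)
    (hlam0 : ∀ i, 0 < lam 0 i)
    (hxstep : ∀ s : ℕ,
      f (x (s + 1)) < f y ∧ (∀ i, 0 < k * c i (x (s + 1)) + 1) ∧
      IsMinOn (fun z => -Real.log (f y - f z)
          - k⁻¹ * ∑ i, lam s i * Real.log (k * c i z + 1))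
        {z : EuclideanSpace ℝ (Fin n) | f z < f y ∧ ∀ i, 0 < k * c i z + 1}
        (x (s + 1)))
    (hlamstep : ∀ s : ℕ, ∀ i,
      lam (s + 1) i = lam s i * (k * c i (x (s + 1)) + 1)⁻¹) :
    Filter.Tendsto (fun s : ℕ => ∑ i, lam s i * c i (x s))
      Filter.atTop (nhds 0) :=
  EPM_asymptotic_complementarity_general f c hf hc hcd Ω hΩ Xstar hXstar hne y hy hfy k hk x lam
    hlam0 hxstep hlamstep
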